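/- The tensor rank of the n-qudit N state N(d,n) = |0⟩^⊗(n-1) ⊗ |d-1⟩ + Σ_{i=0}^{n-2} Σ_{j=1}^{d-1} |0⟩^⊗(n-i-2) ⊗ |j⟩ ⊗ |0⟩^⊗i ⊗ |d-j-1⟩ equals (n-1)(d-1) + 1, for n ≥ 2, d ≥ 2. -/

import Mathlib

open scoped BigOperators

/-- Contraction of a tensor by a covector (given in coordinates) in the first factor. -/
noncomputable def contrFirst {n : ℕ} {d : Fin (n + 1) → ℕ} (f : Fin (d 0) → ℂ)
    (T : ((i : Fin (n + 1)) → Fin (d i)) → ℂ) :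
    ((i : Fin n) → Fin (d i.succ)) → ℂ :=
  fun y => ∑ j : Fin (d 0), f j * T (Fin.cons j y)

/-- `T` is 1-concise: it lies in `V₁' ⊗ V₂ ⊗ ⋯ ⊗ Vₙ` only for `V₁' = V₁`.
In coordinates, `T` lies in `V₁' ⊗ (rest)` iff all its first-factor coordinate
slices (as vectors of `V₁`) lie in `V₁'`. -/
noncomputable def Concise1 {n : ℕ} {d : Fin (n + 1) → ℕ}
    (T : ((i : Fin (n + 1)) → Fin (d i)) → ℂ) : Prop :=
  ∀ V' : Submodule ℂ (Fin (d 0) → ℂ),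
    (∀ y : (i : Fin n) → Fin (d i.succ), (fun j => T (Fin.cons j y)) ∈ V') → V' = ⊤

/-- Persistent tensors, defined inductively on the number of factors (`n + 2` factors). -/
noncomputable def Persistent : (n : ℕ) → (d : Fin (n + 2) → ℕ) →
    (((i : Fin (n + 2)) → Fin (d i)) → ℂ) → Prop
  | 0, _, T => Concise1 T
  | n + 1, d, T => Concise1 T ∧ ∃ S : Submodule ℂ (Fin (d 0) → ℂ), S ≠ ⊤ ∧
      ∀ f : Fin (d 0) → ℂ, f ∉ S → Persistent n (fun i => d i.succ) (contrFirst f T)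

/-- Tensor rank: minimal number of simple tensors summing to `T`. -/
noncomputable def tensorRank {ι : Type} [Fintype ι] {κ : ι → Type}
    (T : ((i : ι) → κ i) → ℂ) : ℕ :=
  sInf {r | ∃ v : Fin r → (i : ι) → κ i → ℂ, ∀ x, T x = ∑ p, ∏ i, v p i (x i)}

/-- Border rank: smallest `r` such that `T` is a limit of tensors of rank at most `r`. -/
noncomputable def borderRank {ι : Type} [Fintype ι] {κ : ι → Type}
    (T : ((i : ι) → κ i) → ℂ) : ℕ :=
  sInf {r | ∃ seq : ℕ → (((i : ι) → κ i) → ℂ),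
    (∀ k, tensorRank (seq k) ≤ r) ∧ Filter.Tendsto seq Filter.atTop (nhds T)}

/-- Direct sum of tensors, in coordinates. -/
noncomputable def dsum {n : ℕ} {a b : Fin n → ℕ}
    (T : ((i : Fin n) → Fin (a i)) → ℂ) (P : ((i : Fin n) → Fin (b i)) → ℂ) :
    ((i : Fin n) → Fin (a i + b i)) → ℂ :=
  fun x =>
    if h : ∀ i, (x i).val < a i then T (fun i => ⟨(x i).val, h i⟩)
    else if h' : ∀ i, a i ≤ (x i).val then
      P (fun i => ⟨(x i).val - a i, by have := (x i).isLt; have := h' i; omega⟩)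
    else 0

/-- Kronecker product of tensors (grouping corresponding factors). -/
noncomputable def kron {ι : Type} (κ₁ κ₂ : ι → Type)
    (A : ((i : ι) → κ₁ i) → ℂ) (B : ((i : ι) → κ₂ i) → ℂ) :
    ((i : ι) → κ₁ i × κ₂ i) → ℂ :=
  fun x => A (fun i => (x i).1) * B (fun i => (x i).2)

/-- Tensor product of tensors (as a tensor with all factors of both). -/
noncomputable def tprodT {ι ι' : Type} (κ₁ : ι → Type) (κ₂ : ι' → Type)
    (A : ((i : ι) → κ₁ i) → ℂ) (B : ((i : ι') → κ₂ i) → ℂ) :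
    ((i : ι ⊕ ι') → Sum.elim κ₁ κ₂ i) → ℂ :=
  fun x => A (fun i => x (.inl i)) * B (fun i => x (.inr i))

/-- The n-qudit GHZ tensor `∑ⱼ |j⟩^⊗n`. -/
noncomputable def GHZ (D n : ℕ) : ((Fin n) → Fin D) → ℂ :=
  fun x => if ∃ j : Fin D, ∀ i, x i = j then 1 else 0

/-- The n-qubit W state: sum of basis vectors with exactly one coordinate equal to 1. -/
noncomputable def Wfun (n : ℕ) : ((Fin n) → Fin 2) → ℂ :=
  fun x => if (Finset.univ.filter fun i => x i = 1).card = 1 then 1 else 0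

/-- The n-qudit L state `∑_{j₁+⋯+jₙ = d-1} |j₁⋯jₙ⟩`. -/
noncomputable def Lfun (D n : ℕ) : ((Fin n) → Fin D) → ℂ :=
  fun x => if ∑ i, (x i).val = D - 1 then 1 else 0

/-- Primitive r-th root of unity `exp(2πi/r)`. -/
noncomputable def zeta (r : ℕ) : ℂ := Complex.exp (2 * Real.pi * Complex.I / r)

/-- The n-qudit N state, with `n + 2` factors. -/
noncomputable def Nfun (n D : ℕ) : ((i : Fin (n + 2)) → Fin D) → ℂ :=
  fun x =>
    (if (∀ i : Fin (n + 1), (x i.castSucc).val = 0) ∧ (x (Fin.last (n + 1))).val = D - 1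
      then 1 else 0)
    + ∑ k : Fin (n + 1), ∑ j : Fin D,
        if 1 ≤ j.val ∧
          x = (fun i => if i = Fin.last (n + 1) then
                  ⟨D - 1 - j.val, by have := j.isLt; omega⟩
                else if i = k.castSucc then j else ⟨0, j.pos⟩)
        then 1 else 0

set_option linter.unusedSectionVars false



def NWpt (n D : ℕ) (k : Fin (n+1)) (j : Fin D) : Fin (n+2) → Fin D :=
  fun i => if i = Fin.last (n + 1) then ⟨D - 1 - j.val, by have := j.isLt; omega⟩
    else if i = k.castSucc then j else ⟨0, j.pos⟩

lemma Nfun_eq (n D : ℕ) (x : Fin (n+2) → Fin D) : Nfun n D x =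
    (if (∀ i : Fin (n + 1), (x i.castSucc).val = 0) ∧ (x (Fin.last (n + 1))).val = D - 1
      then 1 else 0)
    + ∑ k : Fin (n + 1), ∑ j : Fin D, if 1 ≤ j.val ∧ x = NWpt n D k j then 1 else 0 := rfl

noncomputable def Eu (n D : ℕ) (u : Fin D → ℂ) : (Fin (n+2) → Fin D) → ℂ :=
  fun y => (if ∀ i : Fin (n + 1), (y i.castSucc).val = 0 then 1 else 0) * u (y (Fin.last (n+1)))

noncomputable def NW (n D : ℕ) (w : Fin D → ℂ) : (Fin (n+2) → Fin D) → ℂ :=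
  fun x => Nfun n D x + Eu n D w x

section
variable {D : ℕ} [NeZero D]

lemma NWpt_succ (n : ℕ) (k : Fin (n+1)) (j : Fin D) (i : Fin (n+2)) :
    NWpt (n+1) D k.succ j i.succ = NWpt n D k j i := by
  unfold NWpt
  have h1 : i.succ = Fin.last (n + 2) ↔ i = Fin.last (n + 1) := by
    rw [← Fin.succ_last, Fin.succ_inj]
  have h2 : i.succ = (k.succ).castSucc ↔ i = k.castSucc := by
    rw [← Fin.succ_castSucc, Fin.succ_inj]
  by_cases hl : i = Fin.last (n+1)
  · rw [if_pos hl, if_pos (h1.mpr hl)]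
  · rw [if_neg hl, if_neg (fun h => hl (h1.mp h))]
    by_cases hk : i = k.castSucc
    · rw [if_pos hk, if_pos (h2.mpr hk)]
    · rw [if_neg hk, if_neg (fun h => hk (h2.mp h))]

lemma NWpt_succ_zero (n : ℕ) (k : Fin (n+1)) (j : Fin D) :
    (NWpt (n+1) D k.succ j 0).val = 0 := by
  unfold NWpt
  rw [if_neg, if_neg]
  · intro h
    have := congrArg Fin.val h
    simp [Fin.val_succ] at this
  · intro h
    have := congrArg Fin.val h
    simp at this

lemma NWpt_zero_succ (n : ℕ) (j : Fin D) (i : Fin (n+2)) :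
    NWpt (n+1) D 0 j i.succ
      = if i = Fin.last (n+1) then ⟨D - 1 - j.val, by have := j.isLt; omega⟩
        else ⟨0, j.pos⟩ := by
  unfold NWpt
  have h1 : i.succ = Fin.last (n + 2) ↔ i = Fin.last (n + 1) := by
    rw [← Fin.succ_last, Fin.succ_inj]
  have h2 : ¬ (i.succ = (0 : Fin (n+2)).castSucc) := by
    intro h
    have := congrArg Fin.val h
    simp at this
  by_cases hl : i = Fin.last (n+1)
  · rw [if_pos hl, if_pos (h1.mpr hl)]
  · rw [if_neg hl, if_neg (fun h => hl (h1.mp h)), if_neg h2]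

lemma NWpt_zero_zero (n : ℕ) (j : Fin D) : NWpt (n+1) D 0 j 0 = j := by
  unfold NWpt
  rw [if_neg, if_pos]
  · simp
  · intro h
    have := congrArg Fin.val h
    simp at this

lemma slice0_Nfun (n : ℕ) (y : Fin (n+2) → Fin D) :
    Nfun (n+1) D (Fin.cons 0 y) = Nfun n D y := by
  rw [Nfun_eq, Nfun_eq]
  congr 1
  · have hc : ((∀ i : Fin (n + 2), ((Fin.cons 0 y : Fin (n+3) → Fin D) i.castSucc).val = 0) ∧
        ((Fin.cons 0 y : Fin (n+3) → Fin D) (Fin.last (n + 2))).val = D - 1)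
        ↔ ((∀ i : Fin (n + 1), (y i.castSucc).val = 0) ∧ (y (Fin.last (n + 1))).val = D - 1) := by
      constructor
      · rintro ⟨h1, h2⟩
        refine ⟨fun i => ?_, ?_⟩
        · have := h1 i.succ
          rwa [← Fin.succ_castSucc, Fin.cons_succ] at this
        · rwa [← Fin.succ_last, Fin.cons_succ] at h2
      · rintro ⟨h1, h2⟩
        refine ⟨fun i => ?_, ?_⟩
        · induction i using Fin.cases with
          | zero => simp
          | succ i' =>
            rw [← Fin.succ_castSucc, Fin.cons_succ]
            exact h1 i'
        · rwa [← Fin.succ_last, Fin.cons_succ]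
    exact if_congr hc rfl rfl
  · rw [Fin.sum_univ_succ]
    have hzero : (∑ j : Fin D, if 1 ≤ j.val ∧
        (Fin.cons 0 y : Fin (n+3) → Fin D) = NWpt (n+1) D 0 j then 1 else 0) = (0:ℂ) := by
      refine Finset.sum_eq_zero fun j _ => ?_
      rw [if_neg]
      rintro ⟨hj, hx⟩
      have h0 := congrFun hx 0
      rw [Fin.cons_zero, NWpt_zero_zero] at h0
      have := congrArg Fin.val h0
      simp at this
      omega
    rw [hzero, zero_add]
    refine Finset.sum_congr rfl fun k _ => Finset.sum_congr rfl fun j _ => ?_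
    refine if_congr (and_congr_right fun hj => ?_) rfl rfl
    constructor
    · intro hx
      funext i
      have := congrFun hx i.succ
      rwa [Fin.cons_succ, NWpt_succ] at this
    · intro hy
      funext i
      induction i using Fin.cases with
      | zero =>
        rw [Fin.cons_zero]
        exact Fin.ext (NWpt_succ_zero n k j).symm
      | succ i' =>
        rw [Fin.cons_succ, NWpt_succ]
        exact congrFun hy i'

lemma sliceJ_Nfun (n : ℕ) (j : Fin D) (hj : 1 ≤ j.val) (y : Fin (n+2) → Fin D) :
    Nfun (n+1) D (Fin.cons j y) =
      if (∀ i : Fin (n + 1), (y i.castSucc).val = 0) ∧ (y (Fin.last (n+1))).val = D - 1 - j.val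
      then 1 else 0 := by
  rw [Nfun_eq]
  have hfirst : ¬ ((∀ i : Fin (n + 2), ((Fin.cons j y : Fin (n+3) → Fin D) i.castSucc).val = 0) ∧
      ((Fin.cons j y : Fin (n+3) → Fin D) (Fin.last (n + 2))).val = D - 1) := by
    rintro ⟨h1, -⟩
    have := h1 0
    rw [Fin.castSucc_zero, Fin.cons_zero] at this
    omega
  rw [if_neg hfirst, zero_add, Fin.sum_univ_succ]
  have hrest : (∑ k : Fin (n+1), ∑ j' : Fin D, if 1 ≤ j'.val ∧
      (Fin.cons j y : Fin (n+3) → Fin D) = NWpt (n+1) D k.succ j' then 1 else 0) = (0:ℂ) := by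
    refine Finset.sum_eq_zero fun k _ => Finset.sum_eq_zero fun j' _ => ?_
    rw [if_neg]
    rintro ⟨hj', hx⟩
    have h0 := congrFun hx 0
    rw [Fin.cons_zero] at h0
    have := congrArg Fin.val h0
    rw [NWpt_succ_zero] at this
    omega
  rw [hrest, add_zero]
  rw [Finset.sum_eq_single j]
  · refine if_congr (Iff.intro ?_ ?_) rfl rfl
    · rintro ⟨-, hx⟩
      constructor
      · intro i
        have := congrFun hx i.castSucc.succ
        rw [Fin.cons_succ, NWpt_zero_succ] at this
        rw [if_neg (Fin.ne_of_lt (Fin.castSucc_lt_last i))] at this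
        rw [this]
      · have := congrFun hx (Fin.last (n+1)).succ
        rw [Fin.cons_succ, NWpt_zero_succ, if_pos rfl] at this
        rw [this]
    · rintro ⟨h1, h2⟩
      refine ⟨hj, funext fun i => ?_⟩
      induction i using Fin.cases with
      | zero => rw [Fin.cons_zero, NWpt_zero_zero]
      | succ i' =>
        rw [Fin.cons_succ, NWpt_zero_succ]
        induction i' using Fin.lastCases with
        | last => rw [if_pos rfl]; exact Fin.ext h2
        | cast q =>
          rw [if_neg (Fin.ne_of_lt (Fin.castSucc_lt_last q))]
          exact Fin.ext (h1 q)
  · intro j' _ hne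
    rw [if_neg]
    rintro ⟨hj', hx⟩
    have h0 := congrFun hx 0
    rw [Fin.cons_zero, NWpt_zero_zero] at h0
    exact hne h0.symm
  · intro h
    exact absurd (Finset.mem_univ j) h
end

section
variable {D : ℕ} [NeZero D]

lemma slice0_Eu (n : ℕ) (u : Fin D → ℂ) (y : Fin (n+2) → Fin D) :
    Eu (n+1) D u (Fin.cons 0 y) = Eu n D u y := by
  unfold Eu
  have hc : (∀ i : Fin (n + 2), ((Fin.cons 0 y : Fin (n+3) → Fin D) i.castSucc).val = 0)
      ↔ (∀ i : Fin (n + 1), (y i.castSucc).val = 0) := by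
    constructor
    · intro h1 i
      have := h1 i.succ
      rwa [← Fin.succ_castSucc, Fin.cons_succ] at this
    · intro h1 i
      induction i using Fin.cases with
      | zero => simp
      | succ i' =>
        rw [← Fin.succ_castSucc, Fin.cons_succ]
        exact h1 i'
  rw [if_congr hc rfl rfl, ← Fin.succ_last, Fin.cons_succ]

lemma sliceJ_Eu (n : ℕ) (u : Fin D → ℂ) (j : Fin D) (hj : 1 ≤ j.val)
    (y : Fin (n+2) → Fin D) : Eu (n+1) D u (Fin.cons j y) = 0 := by
  unfold Eu
  rw [if_neg, zero_mul]
  intro h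
  have := h 0
  rw [Fin.castSucc_zero, Fin.cons_zero] at this
  omega

lemma slice0_NW (n : ℕ) (w : Fin D → ℂ) (y : Fin (n+2) → Fin D) :
    NW (n+1) D w (Fin.cons 0 y) = NW n D w y := by
  unfold NW
  rw [slice0_Nfun, slice0_Eu]

lemma sliceJ_NW (n : ℕ) (w : Fin D → ℂ) (j : Fin D) (hj : 1 ≤ j.val)
    (y : Fin (n+2) → Fin D) :
    NW (n+1) D w (Fin.cons j y)
      = Eu n D (fun l => if l.val = D - 1 - j.val then 1 else 0) y := by
  unfold NW
  rw [sliceJ_Nfun n j hj, sliceJ_Eu n w j hj, add_zero]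
  unfold Eu
  by_cases hA : ∀ i : Fin (n + 1), (y i.castSucc).val = 0
  · rw [if_pos hA, one_mul]
    by_cases hB : (y (Fin.last (n+1))).val = D - 1 - j.val
    · rw [if_pos ⟨hA, hB⟩]; simp [hB]
    · rw [if_neg (fun h => hB h.2)]; simp [hB]
  · rw [if_neg (fun h => hA h.1), if_neg hA, zero_mul]
end


def Dec {D m : ℕ} (T : (Fin m → Fin D) → ℂ) (r : ℕ) : Prop :=
  ∃ v : Fin r → Fin m → Fin D → ℂ, ∀ x, T x = ∑ p, ∏ i, v p i (x i)

lemma prod_ite_indicator {D m : ℕ} (x pt : Fin m → Fin D) :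
    (∏ i, if x i = pt i then (1:ℂ) else 0) = if x = pt then 1 else 0 := by
  by_cases h : x = pt
  · subst h; simp
  · rw [if_neg h]
    obtain ⟨i, hi⟩ : ∃ i, x i ≠ pt i := by
      by_contra hc; push_neg at hc; exact h (funext hc)
    exact Finset.prod_eq_zero (Finset.mem_univ i) (if_neg hi)

lemma dec_of_card {D m : ℕ} {ι : Type} [Fintype ι] {T : (Fin m → Fin D) → ℂ}
    (u : ι → Fin m → Fin D → ℂ) (h : ∀ x, T x = ∑ a : ι, ∏ i, u a i (x i))
    {r : ℕ} (hcard : Fintype.card ι = r) : Dec T r := by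
  have e : Fin r ≃ ι := (Fintype.equivFinOfCardEq hcard).symm
  refine ⟨fun p => u (e p), fun x => ?_⟩
  rw [h x]
  exact (Equiv.sum_comp e (fun a => ∏ i, u a i (x i))).symm

lemma Dec.contr {D m r : ℕ} {T : (Fin (m+2) → Fin D) → ℂ} (h : Dec T r)
    (f : Fin D → ℂ) :
    Dec (fun y : Fin (m+1) → Fin D => ∑ j, f j * T (Fin.cons j y)) r := by
  obtain ⟨v, hv⟩ := h
  refine ⟨fun p i a => (if i = 0 then (∑ j, f j * v p 0 j) else 1) * v p i.succ a,
    fun y => ?_⟩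
  have key : ∀ p : Fin r, (∏ i : Fin (m+1),
      (if i = 0 then (∑ j, f j * v p 0 j) else 1) * v p i.succ (y i))
      = (∑ j, f j * v p 0 j) * ∏ i : Fin (m+1), v p i.succ (y i) := by
    intro p
    rw [Finset.prod_mul_distrib]
    congr 1
    simp
  simp only [key]
  have expand : ∀ j : Fin D, T (Fin.cons j y) = ∑ p, v p 0 j * ∏ i : Fin (m+1), v p i.succ (y i) := by
    intro j
    rw [hv]
    refine Finset.sum_congr rfl fun p _ => ?_
    rw [Fin.prod_univ_succ]
    simp
  simp only [expand, Finset.mul_sum]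
  rw [Finset.sum_comm]
  refine Finset.sum_congr rfl fun p _ => ?_
  rw [Finset.sum_mul]
  refine Finset.sum_congr rfl fun j _ => ?_
  ring

lemma Dec.step {D m r : ℕ} {T : (Fin (m+1) → Fin D) → ℂ} (h : Dec T r) (m₀ : Fin D)
    (hne : ∃ y, T (Fin.cons m₀ y) ≠ 0) :
    ∃ (lam : Fin D → ℂ) (r' : ℕ), lam m₀ = 1 ∧ r' + 1 ≤ r ∧
      Dec (fun x => T x - lam (x 0) * T (Fin.cons m₀ (fun i => x i.succ))) r' := by
  obtain ⟨v, hv⟩ := h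
  obtain ⟨y₀, hy₀⟩ := hne
  -- expand T at cons points
  have expand : ∀ (j : Fin D) (y : Fin m → Fin D),
      T (Fin.cons j y) = ∑ p, v p 0 j * ∏ i : Fin m, v p i.succ (y i) := by
    intro j y
    rw [hv]
    refine Finset.sum_congr rfl fun p _ => ?_
    rw [Fin.prod_univ_succ]
    simp
  have hp0 : ∃ p, v p 0 m₀ ≠ 0 := by
    by_contra hc
    push_neg at hc
    apply hy₀
    rw [expand]
    refine Finset.sum_eq_zero fun p _ => by rw [hc p]; ring
  obtain ⟨p₀, hp₀⟩ := hp0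
  obtain ⟨r', rfl⟩ : ∃ r', r = r' + 1 := ⟨r - 1, by have := p₀.isLt; omega⟩
  set lam : Fin D → ℂ := fun j => v p₀ 0 j / v p₀ 0 m₀ with hlam
  refine ⟨lam, r', by simp [hlam, div_self hp₀], le_refl _, ?_⟩
  set w : Fin (r'+1) → Fin D → ℂ := fun p j => v p 0 j - lam j * v p 0 m₀ with hw
  have hwp₀ : ∀ j, w p₀ j = 0 := by
    intro j; simp only [hw, hlam]; field_simp; ring
  refine ⟨fun q i => Fin.cases (w (p₀.succAbove q)) (fun i' => v (p₀.succAbove q) i'.succ) i,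
    fun x => ?_⟩
  have hx : x = Fin.cons (x 0) (fun i => x i.succ) := (Fin.cons_self_tail x).symm
  have prodeq : ∀ p : Fin (r'+1), (∏ i : Fin (m+1),
      Fin.cases (w p) (fun i' => v p i'.succ) i ((Fin.cons (x 0) (fun i => x i.succ) : Fin (m+1) → Fin D) i))
      = w p (x 0) * ∏ i : Fin m, v p i.succ (x i.succ) := by
    intro p
    rw [Fin.prod_univ_succ]
    simp
  calc T x - lam (x 0) * T (Fin.cons m₀ (fun i => x i.succ))
      = ∑ p : Fin (r'+1), w p (x 0) * ∏ i : Fin m, v p i.succ (x i.succ) := by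
        conv_lhs => rw [hx]
        rw [expand, expand, Finset.mul_sum, ← Finset.sum_sub_distrib]
        refine Finset.sum_congr rfl fun p _ => ?_
        simp only [hw, hlam, Fin.cons_zero, Fin.cons_succ]; ring
    _ = ∑ q : Fin r', w (p₀.succAbove q) (x 0) * ∏ i : Fin m, v (p₀.succAbove q) i.succ (x i.succ) := by
        rw [Fin.sum_univ_succAbove _ p₀, hwp₀, zero_mul, zero_add]
    _ = _ := by
        refine Finset.sum_congr rfl fun q _ => ?_
        conv_rhs => rw [hx]
        rw [prodeq]
section
variable {D : ℕ} [NeZero D]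

lemma Dec_congr {m r : ℕ} {T S : (Fin m → Fin D) → ℂ} (h : ∀ x, T x = S x)
    (hd : Dec T r) : Dec S r := by
  have : T = S := funext h
  rwa [this] at hd

lemma claim (n : ℕ) (hD : 2 ≤ D)
    (IH : ∀ w : Fin D → ℂ, w ⟨D-1, by omega⟩ = 0 →
      ∀ r, Dec (NW n D w) r → (n+1)*(D-1)+1 ≤ r) :
    ∀ m : ℕ, m ≤ D - 1 →
    ∀ T : (Fin (n+3) → Fin D) → ℂ,
    (∃ w : Fin D → ℂ, w ⟨D-1, by omega⟩ = 0 ∧ ∀ y, T (Fin.cons 0 y) = NW n D w y) →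
    (∀ j : Fin D, 1 ≤ j.val → j.val ≤ m → ∃ u : Fin D → ℂ,
      u ⟨D-1-j.val, by omega⟩ ≠ 0 ∧ (∀ l : Fin D, D-1-j.val < l.val → u l = 0) ∧
      ∀ y, T (Fin.cons j y) = Eu n D u y) →
    ∀ r, Dec T r → m + ((n+1)*(D-1)+1) ≤ r := by
  intro m
  induction m with
  | zero =>
    intro _ T hw0 _ r hdec
    obtain ⟨w, hw, hT0⟩ := hw0
    have h2 := hdec.contr (fun j : Fin D => if j = 0 then 1 else 0)
    have heq : (fun y : Fin (n+2) → Fin D =>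
        ∑ j : Fin D, (if j = 0 then (1:ℂ) else 0) * T (Fin.cons j y)) = NW n D w := by
      funext y
      simp only [ite_mul, one_mul, zero_mul]
      rw [Finset.sum_ite_eq' Finset.univ (0 : Fin D) (fun j => T (Fin.cons j y))]
      rw [if_pos (Finset.mem_univ _)]
      exact hT0 y
    rw [heq] at h2
    simpa using IH w hw r h2
  | succ m ih =>
    intro hm T hw0 hu r hdec
    have hj₀lt : m + 1 < D := by omega
    set j₀ : Fin D := ⟨m+1, hj₀lt⟩ with hj₀
    obtain ⟨u, hu0, husupp, huT⟩ := hu j₀ (by simp [hj₀]) (le_refl _)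
    have hne : ∃ y, T (Fin.cons j₀ y) ≠ 0 := by
      set y₀ : Fin (n+2) → Fin D :=
        fun i => if i = Fin.last (n+1) then ⟨D-1-j₀.val, by omega⟩ else ⟨0, by omega⟩ with hy₀
      refine ⟨y₀, ?_⟩
      rw [huT]
      unfold Eu
      have e1 : ∀ i : Fin (n+1), (y₀ i.castSucc).val = 0 := by
        intro i
        show ((if i.castSucc = Fin.last (n+1) then _ else _ : Fin D)).val = 0
        rw [if_neg (Fin.ne_of_lt (Fin.castSucc_lt_last i))]
      have e2 : y₀ (Fin.last (n+1)) = ⟨D-1-j₀.val, by omega⟩ := by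
        show (if Fin.last (n+1) = Fin.last (n+1) then _ else _ : Fin D) = _
        rw [if_pos rfl]
      rw [if_pos e1, e2, one_mul]
      exact hu0
    obtain ⟨lam, r', hlam, hr, hdec'⟩ := hdec.step j₀ hne
    have sliceT' : ∀ (j : Fin D) (y : Fin (n+2) → Fin D),
        (fun x => T x - lam (x 0) * T (Fin.cons j₀ (fun i => x i.succ))) (Fin.cons j y)
          = T (Fin.cons j y) - lam j * T (Fin.cons j₀ y) := by
      intro j y
      have harg : (fun i : Fin (n+2) => (Fin.cons j y : Fin (n+3) → Fin D) i.succ) = y :=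
        funext fun i => Fin.cons_succ _ _ _
      simp only [Fin.cons_zero, harg]
    obtain ⟨w, hw, hT0⟩ := hw0
    have huD1 : u ⟨D-1, by omega⟩ = 0 := husupp _ (by simp [hj₀]; omega)
    have key := ih (by omega) (fun x => T x - lam (x 0) * T (Fin.cons j₀ (fun i => x i.succ)))
      ⟨fun l => w l - lam 0 * u l, by simp only [hw, huD1]; ring, ?_⟩ ?_ r' hdec'
    · omega
    · intro y
      refine (sliceT' 0 y).trans ?_
      rw [hT0, huT]
      unfold NW Eu
      simp only []
      ring
    · intro j hj1 hjm
      obtain ⟨uj, huj0, hujsupp, hujT⟩ := hu j hj1 (by omega)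
      refine ⟨fun l => uj l - lam j * u l, ?_, ?_, ?_⟩
      · have h0 : u ⟨D-1-j.val, by omega⟩ = 0 := husupp _ (by simp [hj₀]; omega)
        simp only [h0, mul_zero, sub_zero]
        exact huj0
      · intro l hl
        simp only [hujsupp l hl, husupp l (by simp [hj₀] at hl ⊢; omega)]
        ring
      · intro y
        refine (sliceT' j y).trans ?_
        rw [hujT, huT]
        unfold Eu
        simp only []
        ring
end
section
variable {D : ℕ} [NeZero D]
open Submodule Module

set_option maxHeartbeats 1000000 in
lemma base_case (hD : 2 ≤ D) (w : Fin D → ℂ) (hw : w ⟨D-1, by omega⟩ = 0)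
    (r : ℕ) (h : Dec (NW 0 D w) r) : (0+1)*(D-1)+1 ≤ r := by
  obtain ⟨v, hv⟩ := h
  set g : Fin r → Fin D → ℂ := fun p => v p 1 with hg
  set ρ : Fin D → Fin D → ℂ := fun j l => NW 0 D w (Fin.cons j (fun _ => l)) with hρdef
  have e10 : ((1 : Fin 2) : Fin 2) = Fin.succ 0 := by decide
  have hρ : ∀ j, ρ j = ∑ p, (v p 0 j) • g p := by
    intro j
    funext l
    rw [hρdef]
    simp only []
    rw [hv (Fin.cons j (fun _ => l))]
    rw [Finset.sum_apply]
    refine Finset.sum_congr rfl fun p _ => ?_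
    rw [Fin.prod_univ_two, Fin.cons_zero]
    have : (Fin.cons j (fun _ => l) : Fin 2 → Fin D) 1 = l := by
      rw [e10, Fin.cons_succ]
    rw [this, Pi.smul_apply, smul_eq_mul, hg]
  -- explicit rows
  have hlast : Fin.last 1 = (1 : Fin 2) := by decide
  have hco : ∀ (j : Fin D) (y : Fin 1 → Fin D),
      (Fin.cons j y : Fin 2 → Fin D) (Fin.last 1) = y 0 := by
    intro j y
    rw [hlast, e10, Fin.cons_succ]
  have hA : ∀ (j : Fin D) (y : Fin 1 → Fin D),
      (∀ i : Fin 1, ((Fin.cons j y : Fin 2 → Fin D) i.castSucc).val = 0) ↔ j.val = 0 := by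
    intro j y
    constructor
    · intro h1
      have := h1 0
      rwa [Fin.castSucc_zero, Fin.cons_zero] at this
    · intro h1 i
      have : i = 0 := Subsingleton.elim _ _
      rw [this, Fin.castSucc_zero, Fin.cons_zero]
      exact h1
  have pt0 : ∀ j' : Fin D, NWpt 0 D 0 j' 0 = j' := by
    intro j'
    unfold NWpt
    rw [if_neg (by decide), if_pos (by decide)]
  have pt1 : ∀ j' : Fin D, NWpt 0 D 0 j' 1 = ⟨D - 1 - j'.val, by have := j'.isLt; omega⟩ := by
    intro j'
    unfold NWpt
    rw [if_pos (by decide)]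
  have row0 : ∀ l : Fin D, ρ ⟨0, by omega⟩ l = (if l.val = D-1 then 1 else 0) + w l := by
    intro l
    have hEz : ∀ i : Fin 1,
        ((Fin.cons (⟨0, by omega⟩ : Fin D) (fun _ => l) : Fin 2 → Fin D) i.castSucc).val = 0 :=
      (hA _ _).mpr rfl
    have hz : (∑ j' : Fin D, if 1 ≤ j'.val ∧
        (Fin.cons (⟨0, by omega⟩ : Fin D) (fun _ => l) : Fin 2 → Fin D) = NWpt 0 D 0 j'
        then 1 else 0) = (0:ℂ) := by
      refine Finset.sum_eq_zero fun j' _ => ?_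
      rw [if_neg]
      rintro ⟨hj', hx⟩
      have h0 := congrFun hx 0
      rw [Fin.cons_zero, pt0] at h0
      have := congrArg Fin.val h0
      simp at this
      omega
    rw [hρdef]
    simp only []
    rw [NW, Nfun_eq, Fin.sum_univ_one, hz]
    unfold Eu
    rw [hco]
    rw [if_pos hEz, if_congr (and_iff_right hEz) rfl rfl]
    simp
  have rowj : ∀ j : Fin D, 1 ≤ j.val → ∀ l, ρ j l = if l.val = D - 1 - j.val then 1 else 0 := by
    intro j hj l
    rw [hρdef]
    simp only []
    rw [NW, Nfun_eq, Fin.sum_univ_one]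
    have hAn : ¬ (j.val = 0) := by omega
    unfold Eu
    rw [if_neg (fun hc => hAn ((hA _ _).mp hc.1)), if_neg (fun hc => hAn ((hA _ _).mp hc))]
    rw [zero_mul, zero_add, add_zero]
    rw [Finset.sum_eq_single j]
    · refine if_congr (Iff.intro ?_ ?_) rfl rfl
      · rintro ⟨-, hx⟩
        have h1 := congrFun hx 1
        rw [pt1, e10, Fin.cons_succ] at h1
        rw [h1]
      · intro hl
        refine ⟨hj, funext fun i => ?_⟩
        match i with
        | 0 => rw [Fin.cons_zero, pt0]
        | 1 =>
          rw [pt1, e10, Fin.cons_succ]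
          exact Fin.ext hl
    · intro j' _ hne
      rw [if_neg]
      rintro ⟨hj', hx⟩
      have := congrFun hx 0
      rw [Fin.cons_zero, pt0] at this
      exact hne this.symm
    · intro hmem
      exact absurd (Finset.mem_univ j) hmem
  -- linear independence
  have hindep : LinearIndependent ℂ ρ := by
    rw [Fintype.linearIndependent_iff]
    intro c hc
    have hsum : ∀ l : Fin D, (∑ j, c j * ρ j l) = 0 := by
      intro l
      have := congrFun hc l
      simpa [Finset.sum_apply] using this
    have hc0 : c ⟨0, by omega⟩ = 0 := by
      have h1 := hsum ⟨D-1, by omega⟩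
      rw [Finset.sum_eq_single (⟨0, by omega⟩ : Fin D)] at h1
      · rw [row0] at h1
        simp only [hw] at h1
        simpa using h1
      · intro j' _ hne
        have hj' : 1 ≤ j'.val := by
          rcases Nat.eq_zero_or_pos j'.val with h0 | h0
          · exact absurd (Fin.ext h0) hne
          · omega
        rw [rowj j' hj', if_neg (by simp; omega)]
        ring
      · intro hmem
        exact absurd (Finset.mem_univ _) hmem
    intro j
    rcases Nat.eq_zero_or_pos j.val with h0 | h0
    · rwa [show j = ⟨0, by omega⟩ from Fin.ext h0]
    · have h1 := hsum ⟨D - 1 - j.val, by omega⟩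
      rw [Finset.sum_eq_single j] at h1
      · rw [rowj j h0] at h1
        simpa using h1
      · intro j' _ hne
        rcases Nat.eq_zero_or_pos j'.val with h0' | h0'
        · rw [show j' = ⟨0, by omega⟩ from Fin.ext h0', hc0]
          ring
        · rw [rowj j' h0', if_neg (by simp; omega)]
          ring
      · intro hmem
        exact absurd (Finset.mem_univ _) hmem
  -- dimension count
  have hmem : ∀ j, ρ j ∈ span ℂ (Set.range g) := by
    intro j
    rw [hρ j]
    exact sum_mem fun p _ => smul_mem _ _ (subset_span ⟨p, rfl⟩)
  have hle : span ℂ (Set.range ρ) ≤ span ℂ (Set.range g) := by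
    rw [span_le]
    rintro _ ⟨j, rfl⟩
    exact hmem j
  have hD1 : finrank ℂ (span ℂ (Set.range ρ)) = D := by
    rw [finrank_span_eq_card hindep, Fintype.card_fin]
  have hD2 : finrank ℂ (span ℂ (Set.range g)) ≤ r := by
    have := finrank_range_le_card (R := ℂ) g
    rw [Set.finrank] at this
    simpa using this
  have hD3 := Submodule.finrank_mono (s := span ℂ (Set.range ρ)) (t := span ℂ (Set.range g)) hle
  omega
end

lemma lower (n : ℕ) {D : ℕ} [NeZero D] (hD : 2 ≤ D) :
    ∀ w : Fin D → ℂ, w ⟨D-1, by omega⟩ = 0 →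
      ∀ r, Dec (NW n D w) r → (n+1)*(D-1)+1 ≤ r := by
  induction n with
  | zero => exact fun w hw r h => base_case hD w hw r h
  | succ n ih =>
    intro w hw r hdec
    have h := claim n hD ih (D-1) (le_refl _) (NW (n+1) D w)
      ⟨w, hw, fun y => slice0_NW n w y⟩ ?_ r hdec
    · have he : (n+1+1)*(D-1)+1 = (D-1) + ((n+1)*(D-1)+1) := by ring
      rw [he]
      exact h
    · intro j hj1 hjm
      refine ⟨fun l => if l.val = D-1-j.val then 1 else 0, by simp, ?_,
        fun y => sliceJ_NW n w j hj1 y⟩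
      intro l hl
      show (if l.val = D-1-j.val then (1:ℂ) else 0) = 0
      rw [if_neg (by omega)]

lemma subtype_card (D : ℕ) (hD : 2 ≤ D) :
    Fintype.card {j : Fin D // 1 ≤ j.val} = D - 1 := by
  have e : {j : Fin D // 1 ≤ j.val} ≃ Fin (D - 1) :=
    { toFun := fun j => ⟨j.1.val - 1, by have := j.1.isLt; have := j.2; omega⟩
      invFun := fun a => ⟨⟨a.val + 1, by have := a.isLt; omega⟩, by simp⟩
      left_inv := fun j => Subtype.ext (Fin.ext (by have := j.2; simp; omega))
      right_inv := fun a => Fin.ext (by simp) }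
  rw [Fintype.card_congr e, Fintype.card_fin]

lemma upper (n D : ℕ) (hD : 2 ≤ D) : Dec (Nfun n D) ((n+1)*(D-1)+1) := by
  haveI : NeZero D := ⟨by omega⟩
  set ptinf : Fin (n+2) → Fin D :=
    fun i => if i = Fin.last (n+1) then ⟨D-1, by omega⟩ else ⟨0, by omega⟩ with hpt
  refine dec_of_card (ι := Option (Fin (n+1) × {j : Fin D // 1 ≤ j.val}))
    (fun a => match a with
      | none => fun i b => if b = ptinf i then 1 else 0
      | some (k, j) => fun i b => if b = NWpt n D k j.1 i then 1 else 0) ?_ ?_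
  · intro x
    rw [Fintype.sum_option, Fintype.sum_prod_type]
    rw [Nfun_eq]
    congr 1
    · rw [prod_ite_indicator]
      refine (if_congr (Iff.intro ?_ ?_) rfl rfl).symm
      · intro h
        subst h
        constructor
        · intro i
          show ((if (i.castSucc : Fin (n+2)) = Fin.last (n+1) then _ else _ : Fin D)).val = 0
          rw [if_neg (Fin.ne_of_lt (Fin.castSucc_lt_last i))]
        · show ((if (Fin.last (n+1) : Fin (n+2)) = Fin.last (n+1) then _ else _ : Fin D)).val = D - 1
          rw [if_pos rfl]
      · rintro ⟨h1, h2⟩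
        funext i
        induction i using Fin.lastCases with
        | last =>
          show x (Fin.last (n+1)) = (if (Fin.last (n+1) : Fin (n+2)) = Fin.last (n+1) then _ else _ : Fin D)
          rw [if_pos rfl]
          exact Fin.ext h2
        | cast q =>
          show x q.castSucc = (if (q.castSucc : Fin (n+2)) = Fin.last (n+1) then _ else _ : Fin D)
          rw [if_neg (Fin.ne_of_lt (Fin.castSucc_lt_last q))]
          exact Fin.ext (h1 q)
    · refine Finset.sum_congr rfl fun k _ => ?_
      have hsub : ∀ (f : Fin D → ℂ),
          (∑ j : {j : Fin D // 1 ≤ j.val}, f j.1)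
            = ∑ j : Fin D, if 1 ≤ j.val then f j else 0 := by
        intro f
        rw [← Finset.sum_filter]
        exact (Finset.sum_subtype _ (by simp) f).symm
      rw [show (∑ j : {j : Fin D // 1 ≤ j.val},
            ∏ i, if x i = NWpt n D k j.1 i then (1:ℂ) else 0)
          = ∑ j : Fin D, if 1 ≤ j.val then
              (∏ i, if x i = NWpt n D k j i then (1:ℂ) else 0) else 0 from
        hsub (fun j => ∏ i, if x i = NWpt n D k j i then (1:ℂ) else 0)]
      refine Finset.sum_congr rfl fun j _ => ?_
      rw [prod_ite_indicator, ite_and]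
  · rw [Fintype.card_option, Fintype.card_prod, Fintype.card_fin, subtype_card D hD]

theorem rank_N (n D : ℕ) (hD : 2 ≤ D) :
    tensorRank (Nfun n D) = (n + 1) * (D - 1) + 1 := by
  haveI : NeZero D := ⟨by omega⟩
  have hNW : Nfun n D = NW n D (fun _ => 0) := by
    funext x
    show Nfun n D x = Nfun n D x + Eu n D (fun _ => 0) x
    unfold Eu
    simp
  have hub : Dec (Nfun n D) ((n+1)*(D-1)+1) := upper n D hD
  have hlb : ∀ r, Dec (Nfun n D) r → (n+1)*(D-1)+1 ≤ r := by
    intro r h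
    rw [hNW] at h
    exact lower n hD (fun _ => 0) rfl r h
  apply le_antisymm
  · exact Nat.sInf_le hub
  · exact le_csInf ⟨_, hub⟩ (fun b hb => hlb b hb)
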